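/- arXiv:1605.00193 — 2 statements merged into one kernel-verified Lean document; each statement's English description precedes it below -/
import Mathlib

section
/- A finite group G satisfies c(G) = |G| if and only if G is an elementary abelian 2-group (i.e., every element of G has order dividing 2). -/
/-- The number of cyclic subgroups of a group `G` (including the trivial subgroup). -/
noncomputable def numCyclic (G : Type*) [Group G] : ℕ :=
  Nat.card {H : Subgroup G // IsCyclic H}

/-- The number of cyclic subgroups of order `n` in a group `G`. -/
noncomputable def numCyclicOfOrder (G : Type*) [Group G] (n : ℕ) : ℕ :=
  Nat.card {H : Subgroup G // IsCyclic H ∧ Nat.card H = n}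

lemma isCyclic_zpowers' {G : Type*} [Group G] (x : G) : IsCyclic (Subgroup.zpowers x) := by
  refine ⟨⟨⟨x, Subgroup.mem_zpowers x⟩, ?_⟩⟩
  rintro ⟨y, k, rfl⟩
  exact ⟨k, Subtype.ext (by simp)⟩

theorem numCyclic_eq_card_iff (G : Type*) [Group G] [Fintype G] :
    numCyclic G = Fintype.card G ↔ ∀ x : G, x ^ 2 = 1 := by
  classical
  set f : G → {H : Subgroup G // IsCyclic H} :=
    fun x => ⟨Subgroup.zpowers x, isCyclic_zpowers' x⟩ with hf
  have hsurj : Function.Surjective f := by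
    rintro ⟨H, hH⟩
    obtain ⟨⟨g, hgH⟩, hg⟩ := hH.exists_generator
    refine ⟨g, Subtype.ext ?_⟩
    ext y
    simp only [hf, Subgroup.mem_zpowers_iff]
    constructor
    · rintro ⟨k, rfl⟩
      exact H.zpow_mem hgH k
    · intro hy
      obtain ⟨k, hk⟩ := hg ⟨y, hy⟩
      exact ⟨k, congrArg Subtype.val hk⟩
  have hcards : numCyclic G = Fintype.card G ↔ Function.Bijective f := by
    rw [Nat.bijective_iff_surjective_and_card]
    simp only [hsurj, true_and]
    unfold numCyclic
    rw [Nat.card_eq_fintype_card (α := G)]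
    exact eq_comm
  rw [hcards]
  constructor
  · intro hbij x
    have : f x⁻¹ = f x := by
      apply Subtype.ext
      exact Subgroup.zpowers_inv (g := x)
    have hx : x = x⁻¹ := (hbij.1 this).symm
    rw [pow_two]
    exact mul_eq_one_iff_eq_inv.mpr hx
  · intro h2
    refine ⟨fun x y hxy => ?_, hsurj⟩
    have hxy' : Subgroup.zpowers x = Subgroup.zpowers y := congrArg Subtype.val hxy
    have hx : x ∈ Subgroup.zpowers y := hxy' ▸ Subgroup.mem_zpowers x
    have hy : y ∈ Subgroup.zpowers x := hxy'.symm ▸ Subgroup.mem_zpowers y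
    obtain ⟨k, hk⟩ := Subgroup.mem_zpowers_iff.mp hx
    obtain ⟨l, hl⟩ := Subgroup.mem_zpowers_iff.mp hy
    have h2y : y ^ (2 : ℤ) = 1 := by
      rw [show ((2:ℤ)) = ((2:ℕ):ℤ) from rfl, zpow_natCast]
      exact h2 y
    rcases Int.even_or_odd k with ⟨m, hm⟩ | ⟨m, hm⟩
    · have hx1 : x = 1 := by
        rw [← hk, hm, ← two_mul, zpow_mul, h2y, one_zpow]
      have hy1 : y = 1 := by rw [← hl, hx1, one_zpow]
      rw [hx1, hy1]
    · rw [← hk, hm, zpow_add, zpow_mul, h2y, one_zpow, one_mul, zpow_one]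
end

section
/- If G is a finite group whose order is divisible by at least three distinct primes, and p is the largest prime divisor of |G|, then |G| − c(G) > p. -/
/-!
Each element generates exactly one cyclic subgroup and a cyclic subgroup of order `n` has `φ n`
generators, so `|G| - c(G) ≥ ∑_{C ∈ S} (φ |C| - 1)` for every set `S` of cyclic subgroups; for
`|C|` prime the summand is `|C| - 2`.

Some prime `q ≥ 3` other than `p` divides `|G|`, so `p ≥ 5`. If `q ≥ 5`, subgroups of orders `p`
and `q` give `(p - 2) + (q - 2) > p`. Let `q = 3`. Two subgroups of order `p` give `2p - 4 > p`.
Otherwise `⟨x⟩` of order `p` is normal. If `x` normalizes a subgroup `Q = ⟨y⟩` of order `3`, the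
commutator of `x` and `y` lies in `⟨x⟩ ⊓ Q = ⊥`, so `⟨xy⟩` is cyclic of order `3p`, with
`φ(3p) - 1 = 2p - 3 > p`. If not, then `Q`, `xQx⁻¹`, `x²Qx⁻²` are distinct since `x` has odd order,
and with `⟨x⟩` they give `(p - 2) + 3`.
-/

open Finset Subgroup
open scoped Pointwise

theorem Nat.exists_mem_primeFactors_ne_and_three_le {n : ℕ} (h : 3 ≤ #n.primeFactors) (p : ℕ) :
    ∃ q ∈ n.primeFactors, q ≠ p ∧ 3 ≤ q := by
  have hcard : 0 < #(n.primeFactors \ {2, p}) :=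
    lt_of_lt_of_le (by have := card_le_two (a := 2) (b := p); omega) (le_card_sdiff _ _)
  obtain ⟨q, hq⟩ := Finset.card_pos.1 hcard
  simp only [mem_sdiff, mem_insert, mem_singleton, not_or] at hq
  obtain ⟨hqn, hq2, hqp⟩ := hq
  exact ⟨q, hqn, hqp, lt_of_le_of_ne (Nat.prime_of_mem_primeFactors hqn).two_le (Ne.symm hq2)⟩

theorem MulAction.smul_eq_of_sq_smul_eq {M α : Type*} [Monoid M] [MulAction M α] {a : M} {n : ℕ}
    (hn : Odd n) (ha : a ^ n = 1) {s : α} (h : a ^ 2 • s = s) : a • s = s := by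
  obtain ⟨k, rfl⟩ := hn
  have ha' : a = (a ^ 2) ^ (k + 1) := by
    rw [← pow_mul, show 2 * (k + 1) = 2 * k + 1 + 1 by ring, pow_succ, ha, one_mul]
  rw [ha']
  exact (stabilizerSubmonoid M s).pow_mem h (k + 1)

section GroupTheory

variable {G : Type*} [Group G]

theorem Subgroup.normal_of_unique_card {H : Subgroup G}
    (h : ∀ K : Subgroup G, Nat.card K = Nat.card H → K = H) : H.Normal :=
  Normal.of_conjugate_fixed fun g =>
    h _ (Nat.card_congr (equivSMul (MulAut.conj g) H).toEquiv).symm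

theorem commute_of_mem_normalizer_of_disjoint {H K : Subgroup G} (hHK : Disjoint H K) {x y : G}
    (hx : x ∈ H) (hy : y ∈ K) (hxK : x ∈ normalizer (K : Set G))
    (hyH : y ∈ normalizer (H : Set G)) : Commute x y := by
  rw [← commutatorElement_eq_one_iff_commute, commutatorElement_def]
  apply hHK.le_bot
  constructor
  · rw [mul_assoc x y, mul_assoc x]
    exact H.mul_mem hx ((mem_normalizer_iff.1 hyH x⁻¹).1 (H.inv_mem hx))
  · exact K.mul_mem ((mem_normalizer_iff.1 hxK y).1 hy) (K.inv_mem hy)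

end GroupTheory

section Counting

variable {G : Type*} [Group G] [Finite G]

theorem totient_card_le_card_zpowers_eq (C : Subgroup G) [IsCyclic C] :
    (Nat.card C).totient ≤ Nat.card {g : G // zpowers g = C} := by
  classical
  have := Fintype.ofFinite G
  have zpowers_eq : ∀ a : C, orderOf a = Nat.card C → zpowers (a : G) = C := fun a ha =>
    eq_of_le_of_card_ge (zpowers_le.2 a.2) (by rw [Nat.card_zpowers, orderOf_coe, ha])
  calc (Nat.card C).totient = #{a : C | orderOf a = Nat.card C} :=
        (IsCyclic.card_orderOf_eq_totient (Nat.card_eq_fintype_card (α := C)).dvd).symm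
    _ = Nat.card {a : C // orderOf a = Nat.card C} :=
        (Fintype.card_subtype _).symm.trans Nat.card_eq_fintype_card.symm
    _ ≤ Nat.card {g : G // zpowers g = C} :=
        Nat.card_le_card_of_injective (fun a => ⟨a.1, zpowers_eq a.1 a.2⟩)
          fun a b hab => Subtype.ext (Subtype.ext (Subtype.mk.inj hab))

theorem sum_totient_sub_one_le_card_sub_numCyclic (S : Finset (Subgroup G))
    (hS : ∀ C ∈ S, IsCyclic C) :
    ∑ C ∈ S, ((Nat.card C).totient - 1) ≤ Nat.card G - numCyclic G := by
  classical
  have := Fintype.ofFinite G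
  set fiber : Subgroup G → ℕ := fun C => Nat.card {g : G // zpowers g = C}
  set T := univ.image (zpowers : G → Subgroup G)
  have mem_T : ∀ C, C ∈ T ↔ IsCyclic C := fun C => by
    simp [T, C.isCyclic_iff_exists_zpowers_eq_top]
  have card_T : numCyclic G = #T := by
    rw [numCyclic, ← Nat.card_eq_finsetCard]
    exact Nat.card_congr (Equiv.subtypeEquivRight fun C => (mem_T C).symm)
  have card_G : Nat.card G = ∑ C ∈ T, fiber C := by
    rw [Nat.card_eq_fintype_card, ← card_univ,
      card_eq_sum_card_fiberwise (f := zpowers) fun g _ => mem_image_of_mem _ (mem_univ g)]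
    simp [T, fiber, Nat.card_eq_fintype_card, Fintype.card_subtype]
  have le_fiber : ∀ C ∈ T, (Nat.card C).totient ≤ fiber C := fun C hC =>
    have := (mem_T C).1 hC
    totient_card_le_card_zpowers_eq C
  calc ∑ C ∈ S, ((Nat.card C).totient - 1) ≤ ∑ C ∈ T, ((Nat.card C).totient - 1) :=
        sum_le_sum_of_subset fun C hC => (mem_T C).2 (hS C hC)
    _ ≤ ∑ C ∈ T, (fiber C - 1) := sum_le_sum fun C hC => Nat.sub_le_sub_right (le_fiber C hC) 1
    _ = Nat.card G - numCyclic G := by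
        rw [sum_tsub_distrib, card_G, card_T, sum_const, smul_eq_mul, mul_one]
        exact fun C hC => (Nat.totient_pos.2 Nat.card_pos).trans_le (le_fiber C hC)

theorem sum_card_sub_two_le_card_sub_numCyclic (S : Finset (Subgroup G))
    (hS : ∀ C ∈ S, (Nat.card C).Prime) :
    ∑ C ∈ S, (Nat.card C - 2) ≤ Nat.card G - numCyclic G := by
  have hcyc : ∀ C ∈ S, IsCyclic C := fun C hC =>
    have := Fact.mk (hS C hC)
    isCyclic_of_prime_card rfl
  convert sum_totient_sub_one_le_card_sub_numCyclic S hcyc using 1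
  refine sum_congr rfl fun C hC => ?_
  rw [Nat.totient_prime (hS C hC)]
  omega

theorem sub_two_add_sub_two_le_card_sub_numCyclic {P Q : Subgroup G} (hPQ : P ≠ Q)
    (hP : (Nat.card P).Prime) (hQ : (Nat.card Q).Prime) :
    (Nat.card P - 2) + (Nat.card Q - 2) ≤ Nat.card G - numCyclic G := by
  classical
  have hbound := sum_card_sub_two_le_card_sub_numCyclic {P, Q} (by simp [hP, hQ])
  rwa [sum_pair hPQ] at hbound

theorem add_one_le_card_sub_numCyclic_of_notMem_normalizer {x : G} {p : ℕ} (hp : p.Prime)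
    (hp2 : p ≠ 2) (hp3 : p ≠ 3) (hx : orderOf x = p) {Q : Subgroup G} (hQ : Nat.card Q = 3)
    (hxQ : x ∉ normalizer (Q : Set G)) : p + 1 ≤ Nat.card G - numCyclic G := by
  classical
  set a := ConjAct.toConjAct x
  have card_smul : ∀ b : ConjAct G, Nat.card (b • Q : Subgroup G) = 3 := fun b =>
    (Nat.card_congr (equivSMul b Q).toEquiv).symm.trans hQ
  have ha : a ^ p = 1 := by rw [← map_pow, ← hx, pow_orderOf_eq_one, map_one]
  have h1 : a • Q ≠ Q := mt conjAct_pointwise_smul_iff.1 hxQ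
  have h2 : a ^ 2 • Q ≠ Q := mt (MulAction.smul_eq_of_sq_smul_eq (hp.odd_of_ne_two hp2) ha) h1
  have h3 : a ^ 2 • Q ≠ a • Q := by
    rw [pow_two, mul_smul]
    exact mt (fun h => MulAction.injective a h) h1
  have hP : Nat.card (zpowers x) = p := by rw [Nat.card_zpowers, hx]
  have hPQ : ∀ C : Subgroup G, Nat.card C = 3 → zpowers x ≠ C := fun C hC h =>
    hp3 (by rw [← hP, h, hC])
  have hbound := sum_card_sub_two_le_card_sub_numCyclic {zpowers x, Q, a • Q, a ^ 2 • Q} (by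
    simp only [mem_insert, mem_singleton]
    rintro C (rfl | rfl | rfl | rfl) <;> simp only [hP, hQ, card_smul, hp, Nat.prime_three])
  have hP_nmem : zpowers x ∉ ({Q, a • Q, a ^ 2 • Q} : Finset _) := by
    simp only [mem_insert, mem_singleton, not_or]
    exact ⟨hPQ _ hQ, hPQ _ (card_smul a), hPQ _ (card_smul _)⟩
  have hQ_nmem : Q ∉ ({a • Q, a ^ 2 • Q} : Finset _) := by
    simp only [mem_insert, mem_singleton, not_or]
    exact ⟨h1.symm, h2.symm⟩
  rw [sum_insert hP_nmem, sum_insert hQ_nmem, sum_pair h3.symm, hP, hQ, card_smul,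
    card_smul] at hbound
  omega

theorem lt_card_sub_numCyclic_of_five_le {p q : ℕ} (hp : p.Prime) (hq : q.Prime) (hqp : q ≠ p)
    (hq5 : 5 ≤ q) (hpG : p ∣ Nat.card G) (hqG : q ∣ Nat.card G) :
    p < Nat.card G - numCyclic G := by
  have := Fact.mk hp
  have := Fact.mk hq
  obtain ⟨x, hx⟩ := exists_prime_orderOf_dvd_card' p hpG
  obtain ⟨y, hy⟩ := exists_prime_orderOf_dvd_card' q hqG
  have hP : Nat.card (zpowers x) = p := by rw [Nat.card_zpowers, hx]
  have hQ : Nat.card (zpowers y) = q := by rw [Nat.card_zpowers, hy]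
  have hPQ : zpowers x ≠ zpowers y := fun h => hqp (by rw [← hP, ← hQ, h])
  have hbound := sub_two_add_sub_two_le_card_sub_numCyclic hPQ (hP ▸ hp) (hQ ▸ hq)
  omega

theorem lt_card_sub_numCyclic_of_three_dvd {p : ℕ} (hp : p.Prime) (hp5 : 5 ≤ p)
    (hpG : p ∣ Nat.card G) (h3G : 3 ∣ Nat.card G) : p < Nat.card G - numCyclic G := by
  have := Fact.mk hp
  obtain ⟨x, hx⟩ := exists_prime_orderOf_dvd_card' p hpG
  obtain ⟨y, hy⟩ := exists_prime_orderOf_dvd_card' 3 h3G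
  have hP : Nat.card (zpowers x) = p := by rw [Nat.card_zpowers, hx]
  have hQ : Nat.card (zpowers y) = 3 := by rw [Nat.card_zpowers, hy]
  have hcop : p.Coprime 3 := (Nat.coprime_primes hp Nat.prime_three).2 (by omega)
  by_cases hunique : ∀ K : Subgroup G, Nat.card K = p → K = zpowers x
  swap
  · push Not at hunique
    obtain ⟨K, hK, hKP⟩ := hunique
    have hbound := sub_two_add_sub_two_le_card_sub_numCyclic hKP (hK ▸ hp) (hP ▸ hp)
    omega
  have hPn : (zpowers x).Normal := normal_of_unique_card fun K hK => hunique K (hK.trans hP)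
  by_cases hxQ : x ∈ normalizer (zpowers y : Set G)
  · have hxy : Commute x y := commute_of_mem_normalizer_of_disjoint
      (disjoint_of_coprime_natCard (by rwa [hP, hQ]))
      (mem_zpowers x) (mem_zpowers y) hxQ
      (by rw [normalizer_eq_top]; exact mem_top y)
    have hxy_ord : orderOf (x * y) = p * 3 := by
      rw [hxy.orderOf_mul_eq_mul_orderOf_of_coprime (by rwa [hx, hy]), hx, hy]
    have hbound := sum_totient_sub_one_le_card_sub_numCyclic {zpowers (x * y)}
      fun C hC => mem_singleton.1 hC ▸ inferInstance
    rw [sum_singleton, Nat.card_zpowers, hxy_ord, Nat.totient_mul hcop, Nat.totient_prime hp,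
      Nat.totient_prime Nat.prime_three] at hbound
    omega
  · have hbound :=
      add_one_le_card_sub_numCyclic_of_notMem_normalizer hp (by omega) (by omega) hx hQ hxQ
    omega

end Counting

theorem three_primes_card_sub_numCyclic (G : Type*) [Group G] [Fintype G]
    (h3 : 3 ≤ (Fintype.card G).primeFactors.card)
    (p : ℕ) (hp : p ∈ (Fintype.card G).primeFactors)
    (hmax : ∀ r ∈ (Fintype.card G).primeFactors, r ≤ p) :
    Fintype.card G - numCyclic G > p := by
  rw [← Nat.card_eq_fintype_card] at *
  have hp_prime := Nat.prime_of_mem_primeFactors hp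
  obtain ⟨q, hq, hqp, hq3⟩ := Nat.exists_mem_primeFactors_ne_and_three_le h3 p
  have hq_prime := Nat.prime_of_mem_primeFactors hq
  have hqp_lt : q < p := lt_of_le_of_ne (hmax q hq) hqp
  have hp5 : 5 ≤ p := by
    have : p ≠ 4 := by rintro rfl; norm_num at hp_prime
    omega
  obtain rfl | hq5 : q = 3 ∨ 5 ≤ q := by
    have : q ≠ 4 := by rintro rfl; norm_num at hq_prime
    omega
  · exact lt_card_sub_numCyclic_of_three_dvd hp_prime hp5 (Nat.dvd_of_mem_primeFactors hp)
      (Nat.dvd_of_mem_primeFactors hq)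
  · exact lt_card_sub_numCyclic_of_five_le hp_prime hq_prime hqp hq5
      (Nat.dvd_of_mem_primeFactors hp) (Nat.dvd_of_mem_primeFactors hq)
end
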